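/- Let n ≥ 2 be an integer, let l ∈ (0, 2/n), and let α satisfy 2/n ≤ α < 1 + 1/n − l/2. Then there exist θ with 1 < θ < n/(n−2) (interpreting n/(n−2) = ∞ when n = 2) and μ > n/2 such that l(2μ−1)/(4μ−n) < (n(θ + 1 − 2αθ) + 2θ)/(2nθ + n² − n²θ). -/

import Mathlib

/-!
As `μ → ∞` the left-hand side tends to `l / 2`, and as `θ → 1` the right-hand side tends to
`1 + 1 / n - α`; the hypothesis on `α` says precisely that `l / 2 < 1 + 1 / n - α`. Since also
`θ * (n - 2) < n` holds strictly at `θ = 1`, it suffices to take `θ > 1` close to `1` and then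
`μ` large.
-/

open Filter Topology

theorem tendsto_affine_div_affine_atTop {a b c d : ℝ} (hc : c ≠ 0) :
    Tendsto (fun x => (a * x + b) / (c * x + d)) atTop (𝓝 (a / c)) := by
  have hlim : Tendsto (fun x : ℝ => (a + b * x⁻¹) / (c + d * x⁻¹)) atTop
      (𝓝 ((a + b * 0) / (c + d * 0))) :=
    ((tendsto_const_nhds.add (tendsto_inv_atTop_zero.const_mul b)).div
      (tendsto_const_nhds.add (tendsto_inv_atTop_zero.const_mul d)) (by simpa using hc))
  rw [mul_zero, mul_zero, add_zero, add_zero] at hlim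
  refine hlim.congr' ?_
  filter_upwards [eventually_gt_atTop 0] with x hx
  field_simp

theorem tendsto_exponent_ratio_nhds_one {N : ℝ} (hN : N ≠ 0) (α : ℝ) :
    Tendsto (fun θ => (N * (θ + 1 - 2 * α * θ) + 2 * θ) / (2 * N * θ + N ^ 2 - N ^ 2 * θ))
      (𝓝 1) (𝓝 (1 + 1 / N - α)) := by
  have hden : 2 * N * 1 + N ^ 2 - N ^ 2 * 1 ≠ 0 := by simpa using hN
  have hcont : ContinuousAt
      (fun θ => (N * (θ + 1 - 2 * α * θ) + 2 * θ) / (2 * N * θ + N ^ 2 - N ^ 2 * θ)) 1 := by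
    fun_prop (disch := exact hden)
  convert hcont.tendsto using 2
  field_simp
  ring

theorem stmt_3_general (n : ℕ) (hn : 2 ≤ n) (l α : ℝ)
    (hα2 : α < 1 + 1 / n - l / 2) :
    ∃ θ μ : ℝ, 1 < θ ∧ θ * ((n : ℝ) - 2) < n ∧ (n : ℝ) / 2 < μ ∧
      l * (2 * μ - 1) / (4 * μ - n) <
        ((n : ℝ) * (θ + 1 - 2 * α * θ) + 2 * θ) /
          (2 * n * θ + (n : ℝ) ^ 2 - (n : ℝ) ^ 2 * θ) := by
  have hn0 : (n : ℝ) ≠ 0 := Nat.cast_ne_zero.mpr (by omega)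
  obtain ⟨m, hlm, hmα⟩ := exists_between (show l / 2 < 1 + 1 / n - α by linarith)
  have hθ : ∀ᶠ θ in 𝓝[>] (1 : ℝ), 1 < θ ∧ θ * ((n : ℝ) - 2) < n ∧
      m < ((n : ℝ) * (θ + 1 - 2 * α * θ) + 2 * θ) /
        (2 * n * θ + (n : ℝ) ^ 2 - (n : ℝ) ^ 2 * θ) := by
    have hsub : ∀ᶠ θ : ℝ in 𝓝 1, θ * ((n : ℝ) - 2) < n :=
      (continuous_id.mul continuous_const).continuousAt.eventually_lt continuousAt_const
        (by simp)
    exact (eventually_mem_nhdsWithin (s := Set.Ioi 1)).and (nhdsWithin_le_nhds (hsub.and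
      ((tendsto_exponent_ratio_nhds_one hn0 α).eventually (lt_mem_nhds hmα))))
  obtain ⟨θ, hθ1, hθn, hθm⟩ := hθ.exists
  have hlim : Tendsto (fun μ : ℝ => l * (2 * μ - 1) / (4 * μ - n)) atTop (𝓝 (l / 2)) := by
    convert tendsto_affine_div_affine_atTop (a := 2 * l) (b := -l) (d := -n) four_ne_zero
      using 2 <;> ring
  obtain ⟨μ, hμn, hμm⟩ :=
    ((eventually_gt_atTop ((n : ℝ) / 2)).and (hlim.eventually (gt_mem_nhds hlm))).exists
  exact ⟨θ, μ, hθ1, hθn, hμn, hμm.trans hθm⟩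

theorem stmt_3 (n : ℕ) (hn : 2 ≤ n) (l α : ℝ)
    (hl0 : 0 < l) (hl : l < 2 / n)
    (hα1 : 2 / n ≤ α) (hα2 : α < 1 + 1 / n - l / 2) :
    ∃ θ μ : ℝ, 1 < θ ∧ θ * ((n : ℝ) - 2) < n ∧ (n : ℝ) / 2 < μ ∧
      l * (2 * μ - 1) / (4 * μ - n) <
        ((n : ℝ) * (θ + 1 - 2 * α * θ) + 2 * θ) /
          (2 * n * θ + (n : ℝ) ^ 2 - (n : ℝ) ^ 2 * θ) :=
  stmt_3_general n hn l α hα2
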